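/- arXiv:2402.15718 — 4 statements merged into one kernel-verified Lean document; each statement's English description precedes it below -/
import Mathlib

section
/- Let $(\mu_j)_{j \ge 1}$ be a sequence of positive reals, $\gamma > 0$, and suppose there exist constants $0 < c_1 \le c_2$ and $\beta > 1$ with $\beta\gamma > 1$ such that $c_1 j^{-\beta} \le \mu_j \le c_2 j^{-\beta}$ for all $j$. Define $N_\gamma(\lambda) = \sum_{j=1}^\infty \left(\frac{\mu_j}{\mu_j+\lambda}\right)^\gamma$. Then there exist constants $0 < C_1 \le C_2$ (depending only on $c_1, c_2, \beta, \gamma$) such that $C_1 \lambda^{-1/\beta} \le N_\gamma(\lambda) \le C_2 \lambda^{-1/\beta}$ for all $\lambda \in (0, \mu_1]$. -/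
open Real

lemma step_ineq {r : ℝ} (hr : 1 < r) {k : ℕ} (hk : 1 ≤ k) :
    (r - 1) * ((k:ℝ)+1)^(-r) ≤ (k:ℝ)^(1-r) - ((k:ℝ)+1)^(1-r) := by
  have ha : (1:ℝ) ≤ (k:ℝ) := by exact_mod_cast hk
  set a : ℝ := (k:ℝ) with ha_def
  have ha0 : 0 < a := by linarith
  set b : ℝ := a + 1 with hb_def
  have hb0 : 0 < b := by positivity
  have hber : 1 + r * (b/a - 1) ≤ (b/a)^r := by
    have h := one_add_mul_self_le_rpow_one_add (s := b/a - 1) (p := r) (by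
      have : 0 < b/a := by positivity
      linarith) hr.le
    have he : (1:ℝ) + (b/a - 1) = b/a := by ring
    rwa [he] at h
  have hdiv : (b/a)^r = b^r / a^r := Real.div_rpow hb0.le ha0.le r
  have har : 0 < a ^ r := rpow_pos_of_pos ha0 r
  have hbr : 0 < b ^ r := rpow_pos_of_pos hb0 r
  have hA : 0 < a ^ (r-1) := rpow_pos_of_pos ha0 _
  have haA : a ^ r = a ^ (r-1) * a := by
    rw [Real.rpow_sub_one ha0.ne' r]; field_simp
  have key : a^r + r * a^(r-1) ≤ b^r := by
    have h1 : (1 + r * (b/a - 1)) * a^r ≤ (b/a)^r * a^r :=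
      mul_le_mul_of_nonneg_right hber har.le
    rw [hdiv, div_mul_cancel₀ _ har.ne'] at h1
    have hba : b/a - 1 = 1/a := by rw [hb_def]; field_simp; ring
    rw [hba] at h1
    calc a^r + r * a^(r-1) = (1 + r * (1/a)) * a^r := by
          rw [haA]; field_simp
      _ ≤ b^r := h1
  have h1r : a ^ (1-r) = (a ^ (r-1))⁻¹ := by
    rw [show (1-r) = -(r-1) by ring, Real.rpow_neg ha0.le]
  have h2r : b ^ (1-r) = b * b ^ (-r) := by
    rw [show (1-r) = 1 + (-r) by ring, Real.rpow_add hb0, Real.rpow_one]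
  have h3r : b ^ (-r) = (b ^ r)⁻¹ := Real.rpow_neg hb0.le r
  rw [h1r, h2r, h3r]
  have key2 : (r - 1 + b) * a^(r-1) ≤ b^r := by nlinarith [haA]
  have h4 : r - 1 + b ≤ b^r / a^(r-1) := (le_div_iff₀ hA).mpr key2
  have h5 : (r-1+b) * (b^r)⁻¹ ≤ (b^r / a^(r-1)) * (b^r)⁻¹ :=
    mul_le_mul_of_nonneg_right h4 (inv_nonneg.2 hbr.le)
  have h6 : (b^r / a^(r-1)) * (b^r)⁻¹ = (a^(r-1))⁻¹ := by
    field_simp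
  have h7 : (r-1+b) * (b^r)⁻¹ = (r-1) * (b^r)⁻¹ + b * (b^r)⁻¹ := by ring
  rw [h6, h7] at h5
  linarith

lemma tail_bound {r : ℝ} (hr : 1 < r) {n : ℕ} (hn : 1 ≤ n) :
    ∑' j : ℕ, (((j + n : ℕ):ℝ) + 1)^(-r) ≤ (n:ℝ)^(1-r)/(r-1) := by
  have hr1 : 0 < r - 1 := by linarith
  apply Real.tsum_le_of_sum_range_le
  · intro j
    positivity
  · intro m
    have hstep : ∀ j : ℕ, (((j + n : ℕ):ℝ) + 1)^(-r)
        ≤ (((n + j : ℕ):ℝ)^(1-r) - ((n + (j+1) : ℕ):ℝ)^(1-r)) / (r-1) := by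
      intro j
      rw [le_div_iff₀ hr1]
      have hk : 1 ≤ n + j := le_add_right hn
      have h := step_ineq hr hk
      have hc1 : ((j + n : ℕ):ℝ) = ((n + j : ℕ):ℝ) := by push_cast; ring
      have hc2 : ((n + (j+1) : ℕ):ℝ) = ((n + j : ℕ):ℝ) + 1 := by push_cast; ring
      rw [hc1, hc2, mul_comm]
      exact h
    calc ∑ j ∈ Finset.range m, (((j + n : ℕ):ℝ) + 1)^(-r)
        ≤ ∑ j ∈ Finset.range m,
            ((((n + j : ℕ):ℝ))^(1-r) - (((n + (j+1) : ℕ):ℝ))^(1-r)) / (r-1) :=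
          Finset.sum_le_sum (fun j _ => hstep j)
      _ = (∑ j ∈ Finset.range m,
            ((fun i => ((n + i : ℕ):ℝ)^(1-r)) j - (fun i => ((n + i : ℕ):ℝ)^(1-r)) (j+1))) / (r-1) := by
          rw [Finset.sum_div]
      _ = (((n + 0 : ℕ):ℝ)^(1-r) - ((n + m : ℕ):ℝ)^(1-r)) / (r-1) := by
          rw [Finset.sum_range_sub' (fun i => ((n + i : ℕ):ℝ)^(1-r)) m]
      _ ≤ ((n:ℝ))^(1-r) / (r-1) := by
          apply div_le_div_of_nonneg_right ?_ hr1.le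
          have : (0:ℝ) ≤ ((n + m : ℕ):ℝ)^(1-r) := by positivity
          simp only [Nat.add_zero]
          linarith

set_option maxHeartbeats 1000000 in
/-- Polynomial eigenvalue decay `μ_j ≍ j^{-β}` gives refined degrees of freedom
`N_γ(λ) ≍ λ^{-1/β}` (for `βγ > 1`) on `λ ∈ (0, μ₁]`. -/
theorem dof_poly_decay (μ : ℕ → ℝ) (hpos : ∀ j, 0 < μ j) (γ c1 c2 β : ℝ)
    (hγ : 0 < γ) (hc1 : 0 < c1) (hc12 : c1 ≤ c2) (hβ : 1 < β) (hβγ : 1 < β * γ)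
    (hlow : ∀ j : ℕ, c1 * ((j : ℝ) + 1) ^ (-β) ≤ μ j)
    (hup : ∀ j : ℕ, μ j ≤ c2 * ((j : ℝ) + 1) ^ (-β)) :
    ∃ C1 C2 : ℝ, 0 < C1 ∧ C1 ≤ C2 ∧ ∀ lam : ℝ, lam ∈ Set.Ioc 0 (μ 0) →
      C1 * lam ^ (-(1 / β)) ≤ (∑' j, (μ j / (μ j + lam)) ^ γ) ∧
      (∑' j, (μ j / (μ j + lam)) ^ γ) ≤ C2 * lam ^ (-(1 / β)) := by
  have hβ0 : (0:ℝ) < β := by linarith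
  have hβne : β ≠ 0 := hβ0.ne'
  have hc2 : 0 < c2 := lt_of_lt_of_le hc1 hc12
  set r : ℝ := β * γ with hr_def
  have hr : 1 < r := hβγ
  have hr1 : 0 < r - 1 := by linarith
  have h2γ : (0:ℝ) < 2^γ := Real.rpow_pos_of_pos two_pos γ
  have h2γ1 : (1:ℝ) ≤ 2^γ := by
    have := Real.rpow_le_rpow_of_exponent_le one_le_two hγ.le
    simpa using this
  have hc1β : 0 < c1^(1/β) := Real.rpow_pos_of_pos hc1 _
  have hc2β : 0 < c2^(1/β) := Real.rpow_pos_of_pos hc2 _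
  refine ⟨c1^(1/β) / (2 * 2^γ), (2 + 1/(r-1)) * c2^(1/β), by positivity, ?_, ?_⟩
  · have h1 : c1^(1/β) ≤ c2^(1/β) := Real.rpow_le_rpow hc1.le hc12 (by positivity)
    have h3 : c1^(1/β) / (2*2^γ) ≤ c1^(1/β) := by
      apply div_le_self hc1β.le (by nlinarith)
    have hco : (1:ℝ) ≤ 2 + 1/(r-1) := by
      have : 0 < 1/(r-1) := by positivity
      linarith
    have h4 : c2^(1/β) ≤ (2 + 1/(r-1)) * c2^(1/β) := le_mul_of_one_le_left hc2β.le hco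
    linarith
  rintro lam ⟨hlam0, hlamle⟩
  have hμ0 : 0 < μ 0 := hpos 0
  have hμ0c2 : μ 0 ≤ c2 := by
    have h := hup 0
    norm_num [Real.one_rpow] at h
    exact h
  have hlamc2 : lam ≤ c2 := hlamle.trans hμ0c2
  set A : ℝ := lam ^ (-(1/β)) with hA_def
  have hApos : 0 < A := Real.rpow_pos_of_pos hlam0 _
  set x : ℝ := (c2/lam)^(1/β) with hx_def
  set y : ℝ := (c1/lam)^(1/β) with hy_def
  have hx_eq : x = c2^(1/β) * A := by
    rw [hx_def, Real.div_rpow hc2.le hlam0.le, hA_def, Real.rpow_neg hlam0.le,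
      div_eq_mul_inv]
  have hy_eq : y = c1^(1/β) * A := by
    rw [hy_def, Real.div_rpow hc1.le hlam0.le, hA_def, Real.rpow_neg hlam0.le,
      div_eq_mul_inv]
  have hxpos : 0 < x := by rw [hx_eq]; exact mul_pos hc2β hApos
  have hypos : 0 < y := by rw [hy_eq]; exact mul_pos hc1β hApos
  have hx1 : 1 ≤ x := by
    have h1 : (1:ℝ) ≤ c2/lam := (one_le_div hlam0).2 hlamc2
    calc (1:ℝ) = (1:ℝ)^(1/β) := (Real.one_rpow _).symm
      _ ≤ x := Real.rpow_le_rpow (by norm_num) h1 (one_div_pos.mpr hβ0).le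
  -- basic facts about terms
  have hden : ∀ j, 0 < μ j + lam := fun j => by have := hpos j; linarith
  have hratio : ∀ j, 0 ≤ μ j / (μ j + lam) := fun j => div_nonneg (hpos j).le (hden j).le
  have hf_nonneg : ∀ j, 0 ≤ (μ j / (μ j + lam))^γ := fun j => Real.rpow_nonneg (hratio j) γ
  have hf_le_one : ∀ j, (μ j / (μ j + lam))^γ ≤ 1 := by
    intro j
    apply Real.rpow_le_one (hratio j) ?_ hγ.le
    rw [div_le_one (hden j)]
    linarith
  have hf_le : ∀ j, (μ j / (μ j + lam))^γ ≤ (c2/lam)^γ * ((j:ℝ)+1)^(-r) := by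
    intro j
    have hjp : (0:ℝ) < ((j:ℝ)+1)^(-β) := by positivity
    have h1 : μ j / (μ j + lam) ≤ μ j / lam := by
      gcongr
      · exact (hpos j).le
      · linarith [hpos j]
    have h2 : μ j / lam ≤ (c2 * ((j:ℝ)+1)^(-β)) / lam := by
      gcongr
      exact hup j
    have h3 : (μ j / (μ j + lam))^γ ≤ ((c2 * ((j:ℝ)+1)^(-β)) / lam)^γ :=
      Real.rpow_le_rpow (hratio j) (h1.trans h2) hγ.le
    have h4 : ((c2 * ((j:ℝ)+1)^(-β)) / lam)^γ = (c2/lam)^γ * ((j:ℝ)+1)^(-r) := by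
      rw [show c2 * ((j:ℝ)+1)^(-β) / lam = (c2/lam) * ((j:ℝ)+1)^(-β) by ring,
        Real.mul_rpow (div_nonneg hc2.le hlam0.le) hjp.le, ← Real.rpow_mul (by positivity),
        neg_mul, hr_def]
    rw [h4] at h3
    exact h3
  have hsum_pow : Summable (fun j : ℕ => ((j:ℝ)+1)^(-r)) := by
    have h1 : Summable (fun n : ℕ => (n:ℝ)^(-r)) :=
      Real.summable_nat_rpow.2 (by linarith)
    have h2 := (summable_nat_add_iff 1).2 h1
    refine h2.congr fun j => ?_
    norm_cast
  have hsummable : Summable (fun j => (μ j / (μ j + lam))^γ) :=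
    Summable.of_nonneg_of_le hf_nonneg hf_le (hsum_pow.mul_left _)
  have hterm : ∀ j, lam ≤ μ j → (2:ℝ)^(-γ) ≤ (μ j / (μ j + lam))^γ := by
    intro j hj
    have he : (2:ℝ)^(-γ) = ((2:ℝ)⁻¹)^γ := by
      rw [Real.rpow_neg (by norm_num : (0:ℝ) ≤ 2),
        Real.inv_rpow (by norm_num : (0:ℝ) ≤ 2)]
    rw [he]
    apply Real.rpow_le_rpow (by norm_num) ?_ hγ.le
    rw [inv_eq_one_div, div_le_div_iff₀ (by norm_num) (hden j)]
    linarith [hpos j]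
  have h2negγ : (2:ℝ)^(-γ) = ((2:ℝ)^γ)⁻¹ := Real.rpow_neg (by norm_num) γ
  constructor
  · -- lower bound
    obtain ⟨m, hm_def⟩ : ∃ m : ℕ, m = ⌊y⌋₊ := ⟨_, rfl⟩
    have hC1A : c1^(1/β) / (2*2^γ) * A = y / (2*2^γ) := by rw [hy_eq]; ring
    rw [hC1A]
    by_cases hy1 : 1 ≤ y
    · have hm1 : 1 ≤ m := by rw [hm_def]; exact Nat.le_floor (by exact_mod_cast hy1)
      have hm1' : (1:ℝ) ≤ (m:ℝ) := by exact_mod_cast hm1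
      have hym : y < (m:ℝ) + 1 := by rw [hm_def]; exact Nat.lt_floor_add_one y
      have hmy : (m:ℝ) ≤ y := by rw [hm_def]; exact Nat.floor_le hypos.le
      have hjlam : ∀ j ∈ Finset.range m, lam ≤ μ j := by
        intro j hjm
        rw [Finset.mem_range] at hjm
        have hj1 : ((j:ℝ)+1) ≤ y := by
          have : (j:ℝ) + 1 ≤ (m:ℝ) := by exact_mod_cast hjm
          linarith
        have hb2 : ((j:ℝ)+1)^β ≤ y^β :=
          Real.rpow_le_rpow (by positivity) hj1 hβ0.le
        have hb3 : y^β = c1/lam := by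
          rw [hy_def, ← Real.rpow_mul (div_nonneg hc1.le hlam0.le), one_div,
            inv_mul_cancel₀ hβne, Real.rpow_one]
        rw [hb3] at hb2
        have hjβ : (0:ℝ) < ((j:ℝ)+1)^β := by positivity
        have hb4 : ((j:ℝ)+1)^β * lam ≤ c1 := (le_div_iff₀ hlam0).1 hb2
        have hb5 : lam ≤ c1 * ((j:ℝ)+1)^(-β) := by
          rw [Real.rpow_neg (by positivity), ← div_eq_mul_inv, le_div_iff₀ hjβ]
          linarith
        exact hb5.trans (hlow j)
      have hsum_ge : (m:ℝ) * (2:ℝ)^(-γ) ≤ ∑ j ∈ Finset.range m, (μ j / (μ j + lam))^γ := by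
        have := Finset.sum_le_sum (fun j hj => hterm j (hjlam j hj))
        calc (m:ℝ) * (2:ℝ)^(-γ) = ∑ _j ∈ Finset.range m, (2:ℝ)^(-γ) := by
              simp [mul_comm]
          _ ≤ _ := this
      have hps : ∑ j ∈ Finset.range m, (μ j / (μ j + lam))^γ
          ≤ ∑' j, (μ j / (μ j + lam))^γ :=
        Summable.sum_le_tsum _ (fun j _ => hf_nonneg j) hsummable
      have hy2m : y / 2 ≤ (m:ℝ) := by linarith
      have hfin : y / (2*2^γ) ≤ (m:ℝ) * (2:ℝ)^(-γ) := by
        rw [h2negγ]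
        rw [div_le_iff₀ (by positivity)]
        have : (m:ℝ) * ((2:ℝ)^γ)⁻¹ * (2*2^γ) = 2 * (m:ℝ) * (((2:ℝ)^γ)⁻¹ * 2^γ) := by ring
        rw [this, inv_mul_cancel₀ h2γ.ne']
        linarith
      linarith
    · push_neg at hy1
      have h0 : (μ 0 / (μ 0 + lam))^γ ≤ ∑' j, (μ j / (μ j + lam))^γ :=
        Summable.le_tsum hsummable 0 (fun j _ => hf_nonneg j)
      have h1 : (2:ℝ)^(-γ) ≤ (μ 0 / (μ 0 + lam))^γ := hterm 0 hlamle
      have h2 : y / (2*2^γ) ≤ (2:ℝ)^(-γ) := by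
        rw [h2negγ, div_le_iff₀ (by positivity)]
        have : ((2:ℝ)^γ)⁻¹ * (2*2^γ) = 2 * (((2:ℝ)^γ)⁻¹ * 2^γ) := by ring
        rw [this, inv_mul_cancel₀ h2γ.ne']
        linarith
      linarith
  · -- upper bound
    obtain ⟨n, hn_def⟩ : ∃ n : ℕ, n = ⌈x⌉₊ := ⟨_, rfl⟩
    have hn1 : 1 ≤ n := by rw [hn_def]; exact Nat.one_le_ceil_iff.2 (by linarith)
    have hxn : x ≤ (n:ℝ) := by rw [hn_def]; exact Nat.le_ceil x
    have hnx : (n:ℝ) ≤ 2*x := by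
      have h := Nat.ceil_lt_add_one hxpos.le
      rw [hn_def]
      linarith
    have hsplit : (∑ j ∈ Finset.range n, (μ j / (μ j + lam))^γ)
        + ∑' j, (μ (j + n) / (μ (j + n) + lam))^γ = ∑' j, (μ j / (μ j + lam))^γ :=
      Summable.sum_add_tsum_nat_add n hsummable
    have hhead : ∑ j ∈ Finset.range n, (μ j / (μ j + lam))^γ ≤ (n:ℝ) := by
      calc ∑ j ∈ Finset.range n, (μ j / (μ j + lam))^γ
          ≤ ∑ _j ∈ Finset.range n, (1:ℝ) :=
            Finset.sum_le_sum (fun j _ => hf_le_one j)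
        _ = (n:ℝ) := by simp
    have htail_summable : Summable (fun j => (μ (j + n) / (μ (j + n) + lam))^γ) :=
      (summable_nat_add_iff n).2 hsummable
    have hpow_summable : Summable (fun j : ℕ => (((j + n : ℕ):ℝ)+1)^(-r)) :=
      (summable_nat_add_iff n).2 hsum_pow
    have hcγ : (0:ℝ) ≤ (c2/lam)^γ := Real.rpow_nonneg (div_nonneg hc2.le hlam0.le) γ
    have htail : ∑' j, (μ (j + n) / (μ (j + n) + lam))^γ
        ≤ (c2/lam)^γ * ((n:ℝ)^(1-r)/(r-1)) := by
      calc ∑' j, (μ (j + n) / (μ (j + n) + lam))^γ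
          ≤ ∑' j : ℕ, (c2/lam)^γ * (((j + n : ℕ):ℝ)+1)^(-r) :=
            Summable.tsum_le_tsum (fun j => hf_le (j + n)) htail_summable
              (hpow_summable.mul_left _)
        _ = (c2/lam)^γ * ∑' j : ℕ, (((j + n : ℕ):ℝ)+1)^(-r) := tsum_mul_left
        _ ≤ (c2/lam)^γ * ((n:ℝ)^(1-r)/(r-1)) := by
            apply mul_le_mul_of_nonneg_left (tail_bound hr hn1) hcγ
    have hpow : (c2/lam)^γ = x^r := by
      rw [hx_def, ← Real.rpow_mul (div_nonneg hc2.le hlam0.le)]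
      congr 1
      rw [hr_def]
      field_simp
    have hnr : (n:ℝ)^(1-r) ≤ x^(1-r) :=
      Real.rpow_le_rpow_of_nonpos hxpos hxn (by linarith)
    have hxx : x^r * x^(1-r) = x := by
      rw [← Real.rpow_add hxpos]
      norm_num
    have hxr : 0 < x^r := Real.rpow_pos_of_pos hxpos r
    have htail2 : ∑' j, (μ (j + n) / (μ (j + n) + lam))^γ ≤ x / (r-1) := by
      calc ∑' j, (μ (j + n) / (μ (j + n) + lam))^γ
          ≤ (c2/lam)^γ * ((n:ℝ)^(1-r)/(r-1)) := htail
        _ = x^r * (n:ℝ)^(1-r)/(r-1) := by rw [hpow]; ring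
        _ ≤ x^r * x^(1-r)/(r-1) := by
            apply div_le_div_of_nonneg_right ?_ hr1.le
            exact mul_le_mul_of_nonneg_left hnr hxr.le
        _ = x / (r-1) := by rw [hxx]
    have hC2A : (2 + 1/(r-1)) * c2^(1/β) * A = 2*x + x*(1/(r-1)) := by
      rw [hx_eq]; ring
    have htail3 : ∑' j, (μ (j + n) / (μ (j + n) + lam))^γ ≤ x*(1/(r-1)) := by
      calc ∑' j, (μ (j + n) / (μ (j + n) + lam))^γ ≤ x / (r-1) := htail2
        _ = x*(1/(r-1)) := by ring
    rw [hC2A]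
    linarith [hsplit, hhead, htail3]
end

section
/- Let $(\mu_j)_{j \ge 1}$ be positive reals with $c_1 c^{j} \le \mu_j \le c_2 c^{j}$ for constants $0 < c_1 \le c_2$ and $c \in (0,1)$, and let $\gamma > 0$. Define $N_\gamma(\lambda) = \sum_{j=1}^\infty \left(\frac{\mu_j}{\mu_j+\lambda}\right)^\gamma$. Then there exist constants $0 < C_1 \le C_2$ such that $C_1 \log(1/\lambda) \le N_\gamma(\lambda) \le C_2 \log(1/\lambda)$ for all sufficiently small $\lambda > 0$. -/
/-- Exponential eigenvalue decay `μ_j ≍ c^j` gives refined degrees of freedom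
`N_γ(λ) ≍ log(1/λ)` for all sufficiently small `λ > 0`. -/
theorem dof_exp_decay (μ : ℕ → ℝ) (hpos : ∀ j, 0 < μ j) (γ c1 c2 c : ℝ)
    (hγ : 0 < γ) (hc1 : 0 < c1) (hc12 : c1 ≤ c2) (hc : c ∈ Set.Ioo (0 : ℝ) 1)
    (hlow : ∀ j : ℕ, c1 * c ^ (j + 1) ≤ μ j)
    (hup : ∀ j : ℕ, μ j ≤ c2 * c ^ (j + 1)) :
    ∃ C1 C2 lam0 : ℝ, 0 < C1 ∧ C1 ≤ C2 ∧ 0 < lam0 ∧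
      ∀ lam : ℝ, 0 < lam → lam < lam0 →
        C1 * Real.log (1 / lam) ≤ (∑' j, (μ j / (μ j + lam)) ^ γ) ∧
        (∑' j, (μ j / (μ j + lam)) ^ γ) ≤ C2 * Real.log (1 / lam) := by
  obtain ⟨hc0, hcl1⟩ := hc
  have hc2 : 0 < c2 := hc1.trans_le hc12
  have hlogc : Real.log c < 0 := Real.log_neg hc0 hcl1
  obtain ⟨b, hb_def⟩ : ∃ x : ℝ, x = -Real.log c := ⟨_, rfl⟩
  have hb : 0 < b := by rw [hb_def]; linarith
  have hr0 : 0 < c ^ γ := Real.rpow_pos_of_pos hc0 γ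
  have hr1 : c ^ γ < 1 := Real.rpow_lt_one hc0.le hcl1 hγ
  obtain ⟨S, hS_def⟩ : ∃ x : ℝ, x = (1 - c ^ γ)⁻¹ := ⟨_, rfl⟩
  have hS0 : 0 < S := by rw [hS_def]; exact inv_pos.mpr (by linarith)
  have hhalf : (0:ℝ) < (1/2 : ℝ) ^ γ := Real.rpow_pos_of_pos (by norm_num) γ
  have hhalf1 : ((1:ℝ)/2 : ℝ) ^ γ ≤ 1 :=
    Real.rpow_le_one (by norm_num) (by norm_num) hγ.le
  obtain ⟨C1, hC1_def⟩ : ∃ x : ℝ, x = (1/2 : ℝ) ^ γ / (4 * b) := ⟨_, rfl⟩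
  obtain ⟨C2, hC2_def⟩ : ∃ x : ℝ, x = 2 / b + 1 + S := ⟨_, rfl⟩
  obtain ⟨M, hM_def⟩ : ∃ x : ℝ, x = 1 + 4 * b + 2 * |Real.log c1| + |Real.log c2| := ⟨_, rfl⟩
  have hM0 : 0 < M := by
    have := abs_nonneg (Real.log c1); have := abs_nonneg (Real.log c2)
    rw [hM_def]; linarith
  -- (c^j)^γ = (c^γ)^j
  have hcj : ∀ j : ℕ, ((c : ℝ) ^ j) ^ γ = (c ^ γ) ^ j := by
    intro j
    rw [← Real.rpow_natCast c j, ← Real.rpow_mul hc0.le, mul_comm,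
      Real.rpow_mul hc0.le, Real.rpow_natCast]
  refine ⟨C1, C2, Real.exp (-M), by rw [hC1_def]; positivity, ?_, Real.exp_pos _, ?_⟩
  · -- C1 ≤ C2
    have h1 : C1 ≤ 1 / (4 * b) := by
      rw [hC1_def]
      gcongr
    have h2 : (1:ℝ) / (4 * b) ≤ 2 / b := by
      rw [div_le_div_iff₀ (by positivity) hb]; nlinarith
    rw [hC2_def]; linarith
  · intro lam hlam hlam'
    obtain ⟨L, hL_def⟩ : ∃ x : ℝ, x = Real.log (1 / lam) := ⟨_, rfl⟩
    have hLlog : L = -Real.log lam := by rw [hL_def, one_div, Real.log_inv]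
    have hML : M < L := by
      have h := Real.log_lt_log hlam hlam'
      rw [Real.log_exp] at h
      linarith [hLlog]
    have hL1 : 1 ≤ L := by
      have := abs_nonneg (Real.log c1); have := abs_nonneg (Real.log c2)
      rw [hM_def] at hML; linarith
    have hL4b : 4 * b ≤ L := by
      have := abs_nonneg (Real.log c1); have := abs_nonneg (Real.log c2)
      rw [hM_def] at hML; linarith
    have hLc1 : 2 * (-Real.log c1) ≤ L := by
      have h := neg_abs_le (Real.log c1)
      have := abs_nonneg (Real.log c2)
      rw [hM_def] at hML; linarith
    have hLc2 : Real.log c2 ≤ L := by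
      have h := le_abs_self (Real.log c2)
      have := abs_nonneg (Real.log c1)
      rw [hM_def] at hML; linarith
    -- basic term facts
    have hbpos : ∀ j : ℕ, 0 < μ j + lam := fun j => by linarith [hpos j]
    have hterm_nonneg : ∀ j : ℕ, 0 ≤ (μ j / (μ j + lam)) ^ γ := fun j =>
      Real.rpow_nonneg (div_nonneg (hpos j).le (hbpos j).le) γ
    have hterm_le_one : ∀ j : ℕ, (μ j / (μ j + lam)) ^ γ ≤ 1 := fun j =>
      Real.rpow_le_one (div_nonneg (hpos j).le (hbpos j).le)
        ((div_le_one (hbpos j)).mpr (by linarith)) hγ.le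
    -- summability
    have hgeo : Summable (fun j : ℕ => (c ^ γ) ^ j) :=
      summable_geometric_of_lt_one hr0.le hr1
    have hterm_le : ∀ j : ℕ,
        (μ j / (μ j + lam)) ^ γ ≤ (c2 * c / lam) ^ γ * (c ^ γ) ^ j := by
      intro j
      have h1 : μ j / (μ j + lam) ≤ c2 * c ^ (j + 1) / lam :=
        div_le_div₀ (by positivity) (hup j) hlam (by linarith [hpos j])
      have h2 : (μ j / (μ j + lam)) ^ γ ≤ (c2 * c ^ (j + 1) / lam) ^ γ :=
        Real.rpow_le_rpow (div_nonneg (hpos j).le (hbpos j).le) h1 hγ.le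
      have h3 : c2 * c ^ (j + 1) / lam = (c2 * c / lam) * c ^ j := by
        rw [pow_succ]; ring
      rw [h3] at h2
      rwa [Real.mul_rpow (by positivity) (by positivity), hcj j] at h2
    have hsummable : Summable (fun j : ℕ => (μ j / (μ j + lam)) ^ γ) :=
      Summable.of_nonneg_of_le hterm_nonneg hterm_le (hgeo.mul_left _)
    constructor
    · -- lower bound
      obtain ⟨n, hn_le, hn_lt⟩ : ∃ n : ℕ, (n : ℝ) ≤ L / (2 * b) ∧ L / (2 * b) < n + 1 :=
        ⟨⌊L / (2 * b)⌋₊, Nat.floor_le (by positivity), Nat.lt_floor_add_one _⟩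
      have hn_ge : L / (4 * b) ≤ (n : ℝ) := by
        have h4 : (1:ℝ) ≤ L / (4 * b) := by
          rw [le_div_iff₀ (by positivity)]; linarith
        have : L / (2 * b) - L / (4 * b) = L / (4 * b) := by ring
        nlinarith
      -- c1 * c^n ≥ lam
      have hkey : lam ≤ c1 * c ^ n := by
        have hlogs : Real.log lam ≤ Real.log (c1 * c ^ n) := by
          rw [Real.log_mul hc1.ne' (by positivity), Real.log_pow]
          have hnb : (n : ℝ) * b ≤ L / 2 := by
            calc (n:ℝ) * b ≤ (L / (2 * b)) * b :=
                  mul_le_mul_of_nonneg_right hn_le hb.le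
              _ = L / 2 := by field_simp [hb.ne']
          have : -(L/2) ≤ (n : ℝ) * Real.log c := by
            have : (n:ℝ) * b = -((n:ℝ) * Real.log c) := by rw [hb_def]; ring
            linarith [hnb, this]
          linarith [hLlog, hLc1]
        calc lam = Real.exp (Real.log lam) := (Real.exp_log hlam).symm
          _ ≤ Real.exp (Real.log (c1 * c ^ n)) := Real.exp_le_exp.mpr hlogs
          _ = c1 * c ^ n := Real.exp_log (by positivity)
      have hterm_lb : ∀ j ∈ Finset.range n, (1/2 : ℝ) ^ γ ≤ (μ j / (μ j + lam)) ^ γ := by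
        intro j hj
        rw [Finset.mem_range] at hj
        have hmu : lam ≤ μ j := by
          have h1 : c ^ n ≤ c ^ (j + 1) := pow_le_pow_of_le_one hc0.le hcl1.le hj
          have h2 : c1 * c ^ n ≤ c1 * c ^ (j + 1) :=
            mul_le_mul_of_nonneg_left h1 hc1.le
          linarith [hlow j, hkey]
        have hbase : (1/2 : ℝ) ≤ μ j / (μ j + lam) := by
          rw [le_div_iff₀ (hbpos j)]; linarith [hpos j]
        exact Real.rpow_le_rpow (by norm_num) hbase hγ.le
      have hsum_lb : (n : ℝ) * (1/2 : ℝ) ^ γ ≤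
          ∑ j ∈ Finset.range n, (μ j / (μ j + lam)) ^ γ := by
        have := Finset.card_nsmul_le_sum (Finset.range n)
          (fun j => (μ j / (μ j + lam)) ^ γ) ((1/2 : ℝ) ^ γ) hterm_lb
        simpa [Finset.card_range, nsmul_eq_mul] using this
      have htsum_lb : ∑ j ∈ Finset.range n, (μ j / (μ j + lam)) ^ γ ≤
          ∑' j, (μ j / (μ j + lam)) ^ γ :=
        Summable.sum_le_tsum _ (fun i _ => hterm_nonneg i) hsummable
      have : C1 * L ≤ (n : ℝ) * (1/2 : ℝ) ^ γ := by
        rw [hC1_def]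
        calc (1/2:ℝ) ^ γ / (4 * b) * L = (L / (4 * b)) * (1/2:ℝ) ^ γ := by ring
          _ ≤ (n : ℝ) * (1/2:ℝ) ^ γ := mul_le_mul_of_nonneg_right hn_ge hhalf.le
      rw [← hL_def]
      linarith
    · -- upper bound
      obtain ⟨m, hm_ge, hm_lt⟩ : ∃ m : ℕ, 2 * L / b ≤ (m : ℝ) ∧ (m : ℝ) < 2 * L / b + 1 :=
        ⟨⌈2 * L / b⌉₊, Nat.le_ceil _, Nat.ceil_lt_add_one (by positivity)⟩
      -- c2 * c^(m+1) ≤ lam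
      have hkey : c2 * c ^ (m + 1) ≤ lam := by
        have hlogs : Real.log (c2 * c ^ (m + 1)) ≤ Real.log lam := by
          rw [Real.log_mul hc2.ne' (by positivity), Real.log_pow]
          have h1 : 2 * L ≤ ((m : ℝ) + 1) * b := by
            have : 2 * L ≤ (m : ℝ) * b := (div_le_iff₀ hb).mp hm_ge
            nlinarith
          have h2 : ((m : ℕ) + 1 : ℝ) * Real.log c ≤ -(2 * L) := by
            have : ((m:ℝ) + 1) * Real.log c = -(((m:ℝ) + 1) * b) := by
              rw [hb_def]; ring
            linarith [h1, this]
          push_cast at h2 ⊢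
          linarith [hLlog, hLc2, h2]
        calc c2 * c ^ (m + 1) = Real.exp (Real.log (c2 * c ^ (m + 1))) :=
            (Real.exp_log (by positivity)).symm
          _ ≤ Real.exp (Real.log lam) := Real.exp_le_exp.mpr hlogs
          _ = lam := Real.exp_log hlam
      have htail_le : ∀ j : ℕ, (μ (j + m) / (μ (j + m) + lam)) ^ γ ≤ (c ^ γ) ^ j := by
        intro j
        have h1 : μ (j + m) / (μ (j + m) + lam) ≤ c ^ j := by
          have hA : μ (j + m) ≤ lam * c ^ j := by
            have h5 := hup (j + m)
            have h3 : c2 * c ^ (j + m + 1) = (c2 * c ^ (m + 1)) * c ^ j := by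
              rw [show j + m + 1 = (m + 1) + j by ring, pow_add]; ring
            have h4 : (c2 * c ^ (m + 1)) * c ^ j ≤ lam * c ^ j :=
              mul_le_mul_of_nonneg_right hkey (by positivity)
            rw [h3] at h5
            linarith
          rw [div_le_iff₀ (hbpos (j + m))]
          have h6 : 0 ≤ c ^ j * μ (j + m) :=
            mul_nonneg (pow_nonneg hc0.le j) (hpos _).le
          have h7 : c ^ j * (μ (j + m) + lam) = c ^ j * μ (j + m) + lam * c ^ j := by
            ring
          linarith [hA, h6, h7]
        calc (μ (j + m) / (μ (j + m) + lam)) ^ γ ≤ (c ^ j) ^ γ :=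
            Real.rpow_le_rpow (div_nonneg (hpos _).le (hbpos _).le) h1 hγ.le
          _ = (c ^ γ) ^ j := hcj j
      have hshift : Summable (fun j : ℕ => (μ (j + m) / (μ (j + m) + lam)) ^ γ) :=
        (summable_nat_add_iff (f := fun j => (μ j / (μ j + lam)) ^ γ) m).mpr hsummable
      have hsplit : (∑ j ∈ Finset.range m, (μ j / (μ j + lam)) ^ γ) +
          ∑' j, (μ (j + m) / (μ (j + m) + lam)) ^ γ =
          ∑' j, (μ j / (μ j + lam)) ^ γ :=
        Summable.sum_add_tsum_nat_add (f := fun j => (μ j / (μ j + lam)) ^ γ) m hsummable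
      have hhead : ∑ j ∈ Finset.range m, (μ j / (μ j + lam)) ^ γ ≤ (m : ℝ) := by
        calc ∑ j ∈ Finset.range m, (μ j / (μ j + lam)) ^ γ
            ≤ ∑ j ∈ Finset.range m, (1 : ℝ) :=
              Finset.sum_le_sum (fun j _ => hterm_le_one j)
          _ = (m : ℝ) := by simp
      have htail : ∑' j, (μ (j + m) / (μ (j + m) + lam)) ^ γ ≤ S := by
        have h := Summable.tsum_le_tsum htail_le hshift hgeo
        rw [hS_def]
        rwa [tsum_geometric_of_lt_one hr0.le hr1] at h
      have hfin : ∑' j, (μ j / (μ j + lam)) ^ γ ≤ (m : ℝ) + S := by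
        rw [← hsplit]; linarith
      have : (m : ℝ) + S ≤ C2 * L := by
        rw [hC2_def]
        have h2Lb : 2 * L / b = (2 / b) * L := by ring
        have hSL : S ≤ S * L := le_mul_of_one_le_right hS0.le hL1
        have hgoal : (2 / b) * L + L + S * L = (2 / b + 1 + S) * L := by ring
        linarith [hm_lt, hSL, h2Lb, hL1, hgoal]
      rw [← hL_def]
      linarith
end

section
/- Let $M \in \mathbb{R}^{n \times n}$ be a symmetric positive semidefinite matrix and let $d \in \mathbb{R}^n$ be its diagonal, $d_i = M_{ii}$. Then the Hadamard (entrywise) square $M \circ M$ satisfies $M \circ M \succeq \frac{1}{n} d d^\top$, i.e., $M \circ M - \frac{1}{n} d d^\top$ is positive semidefinite. -/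
/-- Vybíral's strengthening of the Schur product theorem:
`M ∘ M ⪰ (1/n) d dᵀ` where `d` is the diagonal of the PSD matrix `M`. -/
theorem hadamard_sq_psd {n : ℕ} (hn : 0 < n) (M : Matrix (Fin n) (Fin n) ℝ)
    (hM : M.PosSemidef) :
    (Matrix.hadamard M M -
      (n : ℝ)⁻¹ • Matrix.vecMulVec (fun i => M i i) (fun i => M i i)).PosSemidef := by
  classical
  open scoped MatrixOrder in
  have hM0 : (0 : Matrix (Fin n) (Fin n) ℝ) ≤ M := Matrix.nonneg_iff_posSemidef.mpr hM
  open scoped MatrixOrder in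
  set A := CFC.sqrt M with hAdef
  have hAsymm : ∀ i j, A i j = A j i := by
    intro i j
    open scoped MatrixOrder in
    have := (IsSelfAdjoint.of_nonneg (CFC.sqrt_nonneg M)).star_eq
    have := congrFun (congrFun this j) i
    simpa [Matrix.conjTranspose_apply] using this
  have hMA : ∀ i j, M i j = ∑ k, A k i * A k j := by
    intro i j
    open scoped MatrixOrder in
    have h := CFC.sqrt_mul_sqrt_self M hM0
    have := congrFun (congrFun h i) j
    rw [← this]
    simp only [Matrix.mul_apply]
    rw [← hAdef]
    exact Finset.sum_congr rfl fun k _ => by rw [hAsymm i k]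
  have hMsymm : ∀ i j, M i j = M j i := by
    intro i j
    have := congrFun (congrFun hM.1 j) i
    simpa [Matrix.conjTranspose_apply] using this
  refine Matrix.PosSemidef.of_dotProduct_mulVec_nonneg ?_ ?_
  · -- Hermitian
    ext i j
    simp only [Matrix.conjTranspose_apply, Matrix.sub_apply, Matrix.hadamard_apply,
      Matrix.smul_apply, Matrix.vecMulVec_apply, star_trivial]
    rw [hMsymm j i]; ring
  · intro x
    simp only [star_trivial, dotProduct, Matrix.mulVec, Matrix.sub_apply,
      Matrix.hadamard_apply, Matrix.smul_apply, Matrix.vecMulVec_apply, dotProduct,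
      smul_eq_mul]
    set B : Matrix (Fin n) (Fin n) ℝ := fun k l => ∑ i, x i * A k i * A l i with hB
    have h1 : ∀ k l, (B k l) ^ 2
        = ∑ i, ∑ j, (x i * x j) * ((A k i * A k j) * (A l i * A l j)) := by
      intro k l
      simp only [hB, sq, Finset.sum_mul_sum]
      exact Finset.sum_congr rfl fun i _ => Finset.sum_congr rfl fun j _ => by ring
    have hS : ∑ k, ∑ l, (B k l) ^ 2
        = ∑ i, x i * ∑ j, (M i j * M i j) * x j := by
      calc ∑ k, ∑ l, (B k l) ^ 2
          = ∑ k, ∑ l, ∑ i, ∑ j, (x i * x j) * ((A k i * A k j) * (A l i * A l j)) := by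
            simp only [h1]
        _ = ∑ k, ∑ i, ∑ l, ∑ j, (x i * x j) * ((A k i * A k j) * (A l i * A l j)) :=
            Finset.sum_congr rfl fun k _ => Finset.sum_comm
        _ = ∑ i, ∑ k, ∑ l, ∑ j, (x i * x j) * ((A k i * A k j) * (A l i * A l j)) :=
            Finset.sum_comm
        _ = ∑ i, ∑ k, ∑ j, ∑ l, (x i * x j) * ((A k i * A k j) * (A l i * A l j)) :=
            Finset.sum_congr rfl fun i _ => Finset.sum_congr rfl fun k _ => Finset.sum_comm
        _ = ∑ i, ∑ j, ∑ k, ∑ l, (x i * x j) * ((A k i * A k j) * (A l i * A l j)) :=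
            Finset.sum_congr rfl fun i _ => Finset.sum_comm
        _ = ∑ i, x i * ∑ j, (M i j * M i j) * x j := by
            refine Finset.sum_congr rfl fun i _ => ?_
            rw [Finset.mul_sum]
            refine Finset.sum_congr rfl fun j _ => ?_
            rw [hMA i j, Finset.sum_mul_sum]
            simp only [Finset.mul_sum, Finset.sum_mul]
            exact Finset.sum_congr rfl fun k _ => Finset.sum_congr rfl fun l _ => by ring
    have hT : ∑ k, B k k = ∑ i, x i * M i i := by
      rw [Finset.sum_comm]
      refine Finset.sum_congr rfl fun i _ => ?_
      rw [hMA i i, Finset.mul_sum]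
      exact Finset.sum_congr rfl fun k _ => by ring
    have hCS : (∑ k, B k k) ^ 2 ≤ (n : ℝ) * ∑ k, ∑ l, (B k l) ^ 2 := by
      have h2 : (∑ k, B k k) ^ 2 ≤ (n : ℝ) * ∑ k, (B k k) ^ 2 := by
        have := Finset.sum_mul_sq_le_sq_mul_sq Finset.univ (fun _ : Fin n => (1 : ℝ))
          (fun k => B k k)
        simpa using this
      refine h2.trans (mul_le_mul_of_nonneg_left ?_ (Nat.cast_nonneg n))
      exact Finset.sum_le_sum fun k _ =>
        Finset.single_le_sum (fun l _ => sq_nonneg (B k l)) (Finset.mem_univ k)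
    have hn' : (0 : ℝ) < n := by exact_mod_cast hn
    have key : (n : ℝ)⁻¹ * (∑ i, x i * M i i) ^ 2
        ≤ ∑ i, x i * ∑ j, (M i j * M i j) * x j := by
      rw [← hS, ← hT, inv_mul_le_iff₀ hn']
      exact hCS
    have goal_eq : ∑ i, x i * ∑ j, (M i j * M i j - (n : ℝ)⁻¹ * (M i i * M j j)) * x j
        = (∑ i, x i * ∑ j, (M i j * M i j) * x j)
          - (n : ℝ)⁻¹ * (∑ i, x i * M i i) ^ 2 := by
      simp only [sub_mul, mul_sub, Finset.mul_sum, Finset.sum_sub_distrib]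
      rw [sub_right_inj, sq, Finset.sum_mul_sum, Finset.mul_sum]
      refine Finset.sum_congr rfl fun i _ => ?_
      rw [Finset.mul_sum]
      exact Finset.sum_congr rfl fun j _ => by ring
    rw [goal_eq]
    linarith [key]
end

section
/- Let $m$ be an even nonnegative integer, $n \ge 1$, and $x_1, \dots, x_n \in [0,1)$. Define the Hermitian matrix $H_n \in \mathbb{C}^{n\times n}$ by $(H_n)_{k\ell} = \sum_{|j| \le m} e^{2\pi i j (x_k - x_\ell)}$. Then $H_n \succeq \frac{m+1}{n} \mathbf{1}\mathbf{1}^\top$ in the Loewner order. -/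
open scoped ComplexOrder
open Complex Finset Matrix

namespace DirichletAux

lemma swap24 {α β γ δ M : Type*} [AddCommMonoid M] (s : Finset α) (t : Finset β)
    (u : Finset γ) (v : Finset δ) (f : α → β → γ → δ → M) :
    ∑ a ∈ s, ∑ b ∈ t, ∑ c ∈ u, ∑ d ∈ v, f a b c d
      = ∑ c ∈ u, ∑ d ∈ v, ∑ a ∈ s, ∑ b ∈ t, f a b c d :=
  calc ∑ a ∈ s, ∑ b ∈ t, ∑ c ∈ u, ∑ d ∈ v, f a b c d
      = ∑ a ∈ s, ∑ c ∈ u, ∑ b ∈ t, ∑ d ∈ v, f a b c d :=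
        Finset.sum_congr rfl fun _ _ => Finset.sum_comm
    _ = ∑ c ∈ u, ∑ a ∈ s, ∑ b ∈ t, ∑ d ∈ v, f a b c d := Finset.sum_comm
    _ = ∑ c ∈ u, ∑ a ∈ s, ∑ d ∈ v, ∑ b ∈ t, f a b c d :=
        Finset.sum_congr rfl fun _ _ => Finset.sum_congr rfl fun _ _ => Finset.sum_comm
    _ = ∑ c ∈ u, ∑ d ∈ v, ∑ a ∈ s, ∑ b ∈ t, f a b c d :=
        Finset.sum_congr rfl fun _ _ => Finset.sum_comm

noncomputable def ee (j : ℤ) (a : ℝ) : ℂ :=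
  Complex.exp (2 * (Real.pi : ℂ) * Complex.I * (j : ℂ) * (a : ℂ))

lemma ee_conj (j : ℤ) (a : ℝ) : (starRingEnd ℂ) (ee j a) = ee j (-a) := by
  unfold ee
  rw [← Complex.exp_conj]
  congr 1
  simp only [_root_.map_mul, Complex.conj_I, Complex.conj_ofReal, map_ofNat, map_intCast,
    Complex.ofReal_neg]
  ring

lemma ee_conj_sub (j : ℤ) (a b : ℝ) :
    (starRingEnd ℂ) (ee j (a - b)) = ee j (b - a) := by
  rw [ee_conj, neg_sub]

lemma ee_sub (j : ℤ) (a b : ℝ) : ee j (a - b) = ee j a * (starRingEnd ℂ) (ee j b) := by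
  rw [ee_conj]
  unfold ee
  rw [← Complex.exp_add]
  congr 1
  push_cast
  ring

lemma ee_sub_idx (j j' : ℤ) (a : ℝ) : ee (j - j') a = ee j a * (starRingEnd ℂ) (ee j' a) := by
  rw [ee_conj]
  unfold ee
  rw [← Complex.exp_add]
  congr 1
  push_cast
  ring

lemma ee_zero (j : ℤ) : ee j 0 = 1 := by
  unfold ee; simp

lemma ee_zero' (a : ℝ) : ee 0 a = 1 := by
  unfold ee; simp

lemma ee_key (j j' : ℤ) (a b : ℝ) :
    ee (j - j') a * (starRingEnd ℂ) (ee (j - j') b)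
      = ee j (a - b) * (starRingEnd ℂ) (ee j' (a - b)) := by
  rw [← ee_sub, ee_sub_idx]

lemma factor {n : ℕ} (x : Fin n → ℝ) (w : Fin n → ℂ) (S : Finset ℤ) :
    ∑ k : Fin n, ∑ l : Fin n, (starRingEnd ℂ) (w k) * w l * (∑ j ∈ S, ee j (x k - x l))
      = ∑ j ∈ S, (∑ k, (starRingEnd ℂ) (w k) * ee j (x k)) *
          (∑ l, w l * (starRingEnd ℂ) (ee j (x l))) := by
  simp only [Finset.mul_sum, Finset.sum_mul]
  calc ∑ k : Fin n, ∑ l : Fin n, ∑ j ∈ S,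
        (starRingEnd ℂ) (w k) * w l * ee j (x k - x l)
      = ∑ k : Fin n, ∑ j ∈ S, ∑ l : Fin n,
        (starRingEnd ℂ) (w k) * w l * ee j (x k - x l) :=
        Finset.sum_congr rfl fun _ _ => Finset.sum_comm
    _ = ∑ j ∈ S, ∑ k : Fin n, ∑ l : Fin n,
        (starRingEnd ℂ) (w k) * w l * ee j (x k - x l) := Finset.sum_comm
    _ = ∑ j ∈ S, ∑ k : Fin n, ∑ l : Fin n,
        (starRingEnd ℂ) (w k) * ee j (x k) * (w l * (starRingEnd ℂ) (ee j (x l))) := by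
        refine Finset.sum_congr rfl fun j _ => Finset.sum_congr rfl fun k _ =>
          Finset.sum_congr rfl fun l _ => ?_
        rw [ee_sub]; ring
    _ = _ := Finset.sum_congr rfl fun j _ => Finset.sum_comm

lemma side2 {n : ℕ} (w : Fin n → ℂ) (B : Matrix (Fin n) (Fin n) ℂ) :
    ∑ i : Fin n, ∑ i' : Fin n,
      (starRingEnd ℂ) (∑ l, w l * B i l * (starRingEnd ℂ) (B i' l)) *
        (∑ l, w l * B i l * (starRingEnd ℂ) (B i' l))
    = ∑ k : Fin n, ∑ l : Fin n, (starRingEnd ℂ) (w k) * w l *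
        ((∑ i, (starRingEnd ℂ) (B i k) * B i l) *
          (starRingEnd ℂ) (∑ i, (starRingEnd ℂ) (B i k) * B i l)) := by
  simp only [map_sum, _root_.map_mul, Complex.conj_conj, Finset.sum_mul_sum, Finset.mul_sum,
    Finset.sum_mul]
  rw [swap24, Finset.sum_comm]
  refine Finset.sum_congr rfl fun k _ => Finset.sum_congr rfl fun l _ => ?_
  rw [Finset.sum_comm]
  refine Finset.sum_congr rfl fun i _ => Finset.sum_congr rfl fun i' _ => ?_
  ring

lemma side1 {n : ℕ} (x : Fin n → ℝ) (w : Fin n → ℂ) (I : Finset ℤ) :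
    ∑ j ∈ I, ∑ j' ∈ I,
      (starRingEnd ℂ) (∑ l, w l * (starRingEnd ℂ) (ee (j - j') (x l))) *
        (∑ l, w l * (starRingEnd ℂ) (ee (j - j') (x l)))
    = ∑ k : Fin n, ∑ l : Fin n, (starRingEnd ℂ) (w k) * w l *
        ((∑ j ∈ I, ee j (x k - x l)) *
          (starRingEnd ℂ) (∑ j ∈ I, ee j (x k - x l))) := by
  simp only [map_sum, _root_.map_mul, Complex.conj_conj, Finset.sum_mul, Finset.mul_sum]
  rw [swap24, Finset.sum_comm]
  refine Finset.sum_congr rfl fun k _ => Finset.sum_congr rfl fun l _ => ?_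
  rw [Finset.sum_comm]
  refine Finset.sum_congr rfl fun j _ => Finset.sum_congr rfl fun j' _ => ?_
  linear_combination ((starRingEnd ℂ) (w k) * w l) * ee_key j' j (x k) (x l)

/-- quadratic form of the kernel matrix with frequencies in `S`. -/
lemma qf (n : ℕ) (x : Fin n → ℝ) (w : Fin n → ℂ) (S : Finset ℤ) :
    star w ⬝ᵥ ((Matrix.of fun k l => ∑ j ∈ S, ee j (x k - x l)) *ᵥ w)
      = ∑ j ∈ S, (starRingEnd ℂ) (∑ l, w l * (starRingEnd ℂ) (ee j (x l))) *
          (∑ l, w l * (starRingEnd ℂ) (ee j (x l))) := by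
  have h1 : star w ⬝ᵥ ((Matrix.of fun k l => ∑ j ∈ S, ee j (x k - x l)) *ᵥ w)
      = ∑ k : Fin n, ∑ l : Fin n, (starRingEnd ℂ) (w k) * w l *
          (∑ j ∈ S, ee j (x k - x l)) := by
    simp only [dotProduct, Matrix.mulVec, Matrix.of_apply, Pi.star_apply,
      RCLike.star_def, Finset.mul_sum, Finset.sum_mul]
    refine Finset.sum_congr rfl fun k _ => Finset.sum_congr rfl fun l _ =>
      Finset.sum_congr rfl fun j _ => ?_
    ring
  rw [h1, factor]
  refine Finset.sum_congr rfl fun j _ => ?_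
  congr 1
  rw [map_sum]
  refine Finset.sum_congr rfl fun l _ => ?_
  simp only [_root_.map_mul, Complex.conj_conj]

end DirichletAux

open DirichletAux

/-- The Dirichlet kernel matrix dominates `((m+1)/n) 𝟙𝟙ᵀ` in the Loewner order. -/
theorem dirichlet_matrix_lower (m n : ℕ) (hm : Even m) (hn : 1 ≤ n)
    (x : Fin n → ℝ) (hx : ∀ i, x i ∈ Set.Ico (0 : ℝ) 1) :
    (Matrix.of (fun k l : Fin n =>
        ∑ j ∈ Finset.Icc (-(m : ℤ)) (m : ℤ),
          Complex.exp (2 * (Real.pi : ℂ) * Complex.I * (j : ℂ) * ((x k - x l : ℝ) : ℂ))) -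
      ((((m : ℝ) + 1) / n : ℝ) : ℂ) • Matrix.of (fun _ _ : Fin n => (1 : ℂ))).PosSemidef := by
  classical
  obtain ⟨p, hp⟩ := hm
  set R : Finset ℤ := Finset.Icc (-(m : ℤ)) (m : ℤ) with hR
  set I : Finset ℤ := Finset.Icc (-(p : ℤ)) (p : ℤ) with hIdef
  set c : ℝ := ((m : ℝ) + 1) / n with hc
  show (Matrix.of (fun k l : Fin n => ∑ j ∈ R, ee j (x k - x l)) -
      (c : ℂ) • Matrix.of (fun _ _ : Fin n => (1 : ℂ))).PosSemidef
  have hcardI : I.card = m + 1 := by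
    rw [hIdef, Int.card_Icc]; omega
  have hcardR : R.card = 2 * m + 1 := by
    rw [hR, Int.card_Icc]; omega
  have hnpos : (0 : ℝ) < n := by exact_mod_cast hn
  have hm1pos : (0 : ℝ) < (m : ℝ) + 1 := by positivity
  refine Matrix.posSemidef_iff_dotProduct_mulVec.mpr ⟨?_, ?_⟩
  · -- Hermitian
    ext k l
    simp only [Matrix.conjTranspose_apply, Matrix.sub_apply, Matrix.smul_apply,
      Matrix.of_apply, star_sub, star_smul, smul_eq_mul, star_one, star_mul', RCLike.star_def,
      map_sum, ee_conj_sub, Complex.conj_ofReal, mul_one]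
  · intro w
    -- the quadratic form of the kernel part
    set T : ℤ → ℂ := fun r => ∑ l, w l * (starRingEnd ℂ) (ee r (x l)) with hT
    set t : ℤ → ℝ := fun r => Complex.normSq (T r) with ht
    have hconjmul : ∀ z : ℂ, (starRingEnd ℂ) z * z = (Complex.normSq z : ℂ) := fun z => by
      rw [mul_comm, Complex.mul_conj]
    have hqfH : star w ⬝ᵥ ((Matrix.of fun k l : Fin n => ∑ j ∈ R, ee j (x k - x l)) *ᵥ w)
        = (∑ r ∈ R, t r : ℝ) := by
      rw [qf n x w R]
      rw [Complex.ofReal_sum]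
      exact Finset.sum_congr rfl fun r _ => hconjmul (T r)
    -- the all-ones part
    have hJ : (Matrix.of (fun _ _ : Fin n => (1 : ℂ)))
        = Matrix.of fun k l : Fin n => ∑ j ∈ ({0} : Finset ℤ), ee j (x k - x l) := by
      ext k l
      simp [ee_zero']
    have hqfJ : star w ⬝ᵥ ((Matrix.of fun _ _ : Fin n => (1 : ℂ)) *ᵥ w) = (t 0 : ℝ) := by
      rw [hJ, qf n x w ({0} : Finset ℤ), Finset.sum_singleton, hconjmul (T 0)]
    -- the p-kernel matrix is PSD
    have hMherm : (Matrix.of fun k l : Fin n => ∑ j ∈ I, ee j (x k - x l)).IsHermitian := by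
      ext k l
      simp only [Matrix.conjTranspose_apply, Matrix.of_apply, RCLike.star_def, map_sum,
        ee_conj_sub]
    have hMpsd : (Matrix.of fun k l : Fin n => ∑ j ∈ I, ee j (x k - x l)).PosSemidef := by
      refine Matrix.posSemidef_iff_dotProduct_mulVec.mpr ⟨hMherm, fun v => ?_⟩
      rw [qf n x v I]
      refine Finset.sum_nonneg fun j _ => ?_
      rw [hconjmul]
      exact Complex.zero_le_real.mpr (Complex.normSq_nonneg _)
    open scoped MatrixOrder Matrix.Norms.L2Operator in
    obtain ⟨B, hB⟩ := CStarAlgebra.nonneg_iff_eq_star_mul_self.mp hMpsd.nonneg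
    have hMent : ∀ k l, ∑ i, (starRingEnd ℂ) (B i k) * B i l = ∑ j ∈ I, ee j (x k - x l) := by
      intro k l
      have := congrFun (congrFun hB k) l
      simp only [Matrix.star_eq_conjTranspose, Matrix.mul_apply, Matrix.conjTranspose_apply, Matrix.of_apply,
        RCLike.star_def] at this
      exact this.symm
    set b : Fin n → Fin n → ℂ := fun i i' => ∑ l, w l * B i l * (starRingEnd ℂ) (B i' l)
      with hb
    -- main identity
    have E1 : ∑ i, ∑ i', (starRingEnd ℂ) (b i i') * b i i'
        = ∑ j ∈ I, ∑ j' ∈ I, (starRingEnd ℂ) (T (j - j')) * T (j - j') := by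
      rw [hb]
      rw [side2 w B]
      have := side1 x w I
      rw [hT]
      rw [this]
      refine Finset.sum_congr rfl fun k _ => Finset.sum_congr rfl fun l _ => ?_
      rw [hMent]
    have e1 : ∑ i, ∑ i', Complex.normSq (b i i')
        = ∑ j ∈ I, ∑ j' ∈ I, t (j - j') := by
      have := E1
      simp only [hconjmul] at this
      exact_mod_cast this
    -- trace identity
    have htr : ∑ i, b i i = (((m : ℝ) + 1 : ℝ) : ℂ) * T 0 := by
      rw [hb, hT]
      rw [Finset.sum_comm]
      have : ∀ l : Fin n, ∑ i, w l * B i l * (starRingEnd ℂ) (B i l)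
          = w l * (((m : ℝ) + 1 : ℝ) : ℂ) := by
        intro l
        have h2 : ∑ i, (starRingEnd ℂ) (B i l) * B i l = (((m : ℝ) + 1 : ℝ) : ℂ) := by
          rw [hMent l l, sub_self]
          simp only [ee_zero]
          rw [Finset.sum_const, hcardI]
          push_cast
          ring
        calc ∑ i, w l * B i l * (starRingEnd ℂ) (B i l)
            = w l * ∑ i, (starRingEnd ℂ) (B i l) * B i l := by
              rw [Finset.mul_sum]; exact Finset.sum_congr rfl fun i _ => by ring
          _ = w l * (((m : ℝ) + 1 : ℝ) : ℂ) := by rw [h2]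
      rw [Finset.sum_congr rfl fun l _ => this l]
      rw [← Finset.sum_mul]
      rw [mul_comm]
      congr 1
      refine Finset.sum_congr rfl fun l _ => ?_
      simp [ee_zero']
    -- real inequalities
    have stepA : ∑ j' ∈ I, ∑ j ∈ I, t (j - j') ≤ ((m : ℝ) + 1) * ∑ r ∈ R, t r := by
      have hsub : ∀ j' ∈ I, ∑ j ∈ I, t (j - j') ≤ ∑ r ∈ R, t r := by
        intro j' hj'
        have hinj : ∀ a ∈ I, ∀ bb ∈ I, a - j' = bb - j' → a = bb := by
          intro a _ bb _ h; omega
        have himg : ∑ r ∈ I.image (fun j => j - j'), t r = ∑ j ∈ I, t (j - j') :=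
          Finset.sum_image hinj
        rw [← himg]
        refine Finset.sum_le_sum_of_subset_of_nonneg ?_ fun r _ _ => Complex.normSq_nonneg _
        intro r hr
        simp only [Finset.mem_image, hIdef, Finset.mem_Icc] at hr
        obtain ⟨a, ⟨ha1, ha2⟩, rfl⟩ := hr
        simp only [hIdef, Finset.mem_Icc] at hj'
        rw [hR, Finset.mem_Icc]
        omega
      calc ∑ j' ∈ I, ∑ j ∈ I, t (j - j') ≤ ∑ j' ∈ I, ∑ r ∈ R, t r :=
            Finset.sum_le_sum hsub
        _ = ((m : ℝ) + 1) * ∑ r ∈ R, t r := by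
            rw [Finset.sum_const, hcardI, nsmul_eq_mul]; push_cast; ring
    have stepB : ∑ i, Complex.normSq (b i i) ≤ ∑ i, ∑ i', Complex.normSq (b i i') :=
      Finset.sum_le_sum fun i _ =>
        Finset.single_le_sum (fun i' _ => Complex.normSq_nonneg _) (Finset.mem_univ i)
    have stepC : Complex.normSq (∑ i, b i i) ≤ (n : ℝ) * ∑ i, Complex.normSq (b i i) := by
      calc Complex.normSq (∑ i, b i i) = ‖∑ i, b i i‖ ^ 2 := by
            rw [← Complex.sq_norm]
        _ ≤ (∑ i, ‖b i i‖) ^ 2 := by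
            have h := norm_sum_le (Finset.univ : Finset (Fin n)) fun i => b i i
            exact pow_le_pow_left₀ (norm_nonneg _) h 2
        _ ≤ ((Finset.univ : Finset (Fin n)).card : ℝ) * ∑ i, ‖b i i‖ ^ 2 :=
            sq_sum_le_card_mul_sum_sq
        _ = (n : ℝ) * ∑ i, Complex.normSq (b i i) := by
            simp [Complex.sq_norm]
    have stepD : Complex.normSq (∑ i, b i i) = ((m : ℝ) + 1) ^ 2 * t 0 := by
      rw [htr, Complex.normSq_mul, Complex.normSq_ofReal, ht]
      ring
    -- combine
    have key : ((m : ℝ) + 1) ^ 2 * t 0 ≤ (n : ℝ) * (((m : ℝ) + 1) * ∑ r ∈ R, t r) := by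
      calc ((m : ℝ) + 1) ^ 2 * t 0 = Complex.normSq (∑ i, b i i) := stepD.symm
        _ ≤ (n : ℝ) * ∑ i, Complex.normSq (b i i) := stepC
        _ ≤ (n : ℝ) * ∑ i, ∑ i', Complex.normSq (b i i') := by
            exact mul_le_mul_of_nonneg_left stepB (le_of_lt hnpos)
        _ = (n : ℝ) * ∑ j ∈ I, ∑ j' ∈ I, t (j - j') := by rw [e1]
        _ = (n : ℝ) * ∑ j' ∈ I, ∑ j ∈ I, t (j - j') := by rw [Finset.sum_comm]
        _ ≤ (n : ℝ) * (((m : ℝ) + 1) * ∑ r ∈ R, t r) :=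
            mul_le_mul_of_nonneg_left stepA (le_of_lt hnpos)
    have hreal : c * t 0 ≤ ∑ r ∈ R, t r := by
      rw [hc, div_mul_eq_mul_div, div_le_iff₀ hnpos]
      nlinarith [key, hm1pos]
    -- final assembly
    rw [Matrix.sub_mulVec, dotProduct_sub, hqfH, Matrix.smul_mulVec,
      dotProduct_smul, hqfJ]
    rw [smul_eq_mul, ← Complex.ofReal_mul, ← Complex.ofReal_sub]
    rw [Complex.zero_le_real]
    linarith [hreal]
end
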